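/- arXiv:math/0406493 — 7 statements merged into one kernel-verified Lean document; each statement's English description precedes it below -/
import Mathlib

section
/- Let A be a finitely generated commutative algebra over an algebraically closed field k of characteristic zero, and let G be a group acting on A by k-algebra automorphisms. Then every G-invariant k-subalgebra of A is finitely generated as a k-algebra if and only if both of the following hold: (i) every G-invariant k-subalgebra of the quotient A/rad(A) (with the induced G-action) is finitely generated as a k-algebra, and (ii) rad(A) is finite-dimensional as a k-vector space. -/
/-- Let `A` be a finitely generated commutative algebra over an algebraically closed field `k`
of characteristic zero, and let `G` be a group acting on `A` by `k`-algebra automorphisms.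
Then every `G`-invariant `k`-subalgebra of `A` is finitely generated if and only if
every `G`-invariant `k`-subalgebra of `A / rad A` (with the induced `G`-action) is
finitely generated and `rad A` is finite-dimensional over `k`. -/
theorem stmt_0 {k : Type*} [Field k] [IsAlgClosed k] [CharZero k]
    {A : Type*} [CommRing A] [Algebra k A] [Algebra.FiniteType k A]
    {G : Type*} [Group G] [MulSemiringAction G A] [SMulCommClass G k A] :
    (∀ B : Subalgebra k A, (∀ (g : G) (b : A), b ∈ B → g • b ∈ B) → B.FG) ↔
      ((∀ C : Subalgebra k (A ⧸ nilradical A),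
          (∀ (g : G) (a : A), Ideal.Quotient.mk (nilradical A) a ∈ C →
            Ideal.Quotient.mk (nilradical A) (g • a) ∈ C) → C.FG) ∧
        FiniteDimensional k ((nilradical A).restrictScalars k)) := by
  classical
  set N := nilradical A with hNdef
  have hNinv : ∀ (g : G) (a : A), a ∈ N → g • a ∈ N := by
    intro g a ha
    show g • a ∈ nilradical A
    rw [mem_nilradical]
    have ha' : IsNilpotent a := mem_nilradical.mp ha
    obtain ⟨n, hn⟩ := ha'
    exact ⟨n, by rw [← smul_pow', hn, smul_zero]⟩
  set π : A →ₐ[k] A ⧸ N := Ideal.Quotient.mkₐ k N with hπdef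
  have hcoe : ⇑π = ⇑(Ideal.Quotient.mk N) := rfl
  have hπsurj : Function.Surjective π := Ideal.Quotient.mkₐ_surjective k N
  constructor
  · intro hB
    constructor
    · -- (i)
      intro C hCinv
      have hfg := hB (C.comap π) (fun g b hb => hCinv g b hb)
      have := Subalgebra.FG.map π hfg
      rwa [Subalgebra.map_comap_eq_self_of_surjective hπsurj] at this
    · -- (ii)
      set B := Algebra.adjoin k (N : Set A) with hBdef
      have hBint : B ≤ integralClosure k A := by
        apply Algebra.adjoin_le
        rintro x hx
        obtain ⟨n, hn⟩ := (mem_nilradical.mp hx)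
        exact ⟨Polynomial.X ^ (n+1), Polynomial.monic_X_pow _, by simp [pow_succ, hn]⟩
      have hBinv : ∀ (g : G) (b : A), b ∈ B → g • b ∈ B := by
        intro g b hb
        have : (MulSemiringAction.toAlgHom k A g) b ∈ B.map (MulSemiringAction.toAlgHom k A g) :=
          Subalgebra.mem_map.mpr ⟨b, hb, rfl⟩
        rw [hBdef, AlgHom.map_adjoin] at this
        exact Algebra.adjoin_mono
          (by rintro _ ⟨y, hy, rfl⟩; exact hNinv g y hy) this
      have hfg := hB B hBinv
      haveI : Algebra.FiniteType k B := (Subalgebra.fg_iff_finiteType B).mp hfg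
      haveI : Algebra.IsIntegral k B := by
        constructor
        rintro ⟨x, hx⟩
        have hxint : IsIntegral k x := hBint hx
        exact (isIntegral_algHom_iff B.val Subtype.val_injective).mp hxint
      haveI : Module.Finite k B := Algebra.IsIntegral.finite
      have hle : N.restrictScalars k ≤ Subalgebra.toSubmodule B :=
        fun x hx => Algebra.subset_adjoin hx
      haveI : FiniteDimensional k (Subalgebra.toSubmodule B) := ‹Module.Finite k B›
      exact Submodule.finiteDimensional_of_le hle
  · rintro ⟨hC, hfd⟩ B hBinv
    have hCinv : ∀ (g : G) (a : A), Ideal.Quotient.mk N a ∈ B.map π →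
        Ideal.Quotient.mk N (g • a) ∈ B.map π := by
      rintro g a ⟨b, hb, hba⟩
      have hba' : Ideal.Quotient.mk N b = Ideal.Quotient.mk N a := hba
      refine ⟨g • b, hBinv g b hb, ?_⟩
      show Ideal.Quotient.mk N (g • b) = Ideal.Quotient.mk N (g • a)
      rw [Ideal.Quotient.mk_eq_mk_iff_sub_mem, ← smul_sub]
      exact hNinv g _ ((Ideal.Quotient.mk_eq_mk_iff_sub_mem b a).mp hba')
    obtain ⟨t, ht⟩ := hC (B.map π) hCinv
    have hpre : ∀ x ∈ t, ∃ b, b ∈ B ∧ π b = x := by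
      intro x hx
      have : x ∈ B.map π := ht ▸ Algebra.subset_adjoin hx
      obtain ⟨b, hb, hbx⟩ := this
      exact ⟨b, hb, hbx⟩
    choose f hf1 hf2 using hpre
    set s : Finset A := t.attach.image (fun x => f x.1 x.2) with hsdef
    have hMfd : FiniteDimensional k (Subalgebra.toSubmodule B ⊓ N.restrictScalars k :
        Submodule k A) := Submodule.finiteDimensional_of_le inf_le_right
    have hMfg : (Subalgebra.toSubmodule B ⊓ N.restrictScalars k).FG :=
      (Submodule.fg_top _).mp (Module.finite_def.mp hMfd)
    obtain ⟨u, hu⟩ := hMfg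
    have hsB : (↑s : Set A) ⊆ ↑B := by
      intro x hx
      simp only [hsdef, Finset.coe_image, Set.mem_image] at hx
      obtain ⟨⟨y, hy⟩, -, rfl⟩ := hx
      exact hf1 y hy
    refine ⟨s ∪ u, le_antisymm ?_ ?_⟩
    · -- adjoin (s ∪ u) ≤ B
      apply Algebra.adjoin_le
      intro x hx
      rw [Finset.coe_union, Set.mem_union] at hx
      rcases hx with hx | hx
      · exact hsB hx
      · have : x ∈ Submodule.span k (↑u : Set A) := Submodule.subset_span hx
        rw [hu] at this
        exact this.1
    · -- B ≤ adjoin (s ∪ u)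
      intro b hb
      have hπb : π b ∈ Algebra.adjoin k (↑t : Set (A ⧸ N)) := by
        rw [ht]; exact ⟨b, hb, rfl⟩
      have hmap : Algebra.adjoin k (↑t : Set (A ⧸ N)) ≤
          (Algebra.adjoin k (↑s : Set A)).map π := by
        apply Algebra.adjoin_le
        intro x hx
        exact ⟨f x hx, Algebra.subset_adjoin (by
          simp only [hsdef, Finset.coe_image, Set.mem_image]
          exact ⟨⟨x, hx⟩, Finset.mem_coe.mpr (Finset.mem_attach _ _), rfl⟩), hf2 x hx⟩
      obtain ⟨b', hb', hb'b⟩ := hmap hπb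
      have hb'B : b' ∈ B := Algebra.adjoin_le hsB hb'
      have hbb' : b - b' ∈ (Subalgebra.toSubmodule B ⊓ N.restrictScalars k : Submodule k A) := by
        refine ⟨sub_mem hb hb'B, ?_⟩
        have hb'b' : Ideal.Quotient.mk N b' = Ideal.Quotient.mk N b := hb'b
        exact (Ideal.Quotient.mk_eq_mk_iff_sub_mem b b').mp hb'b'.symm
      have hsub : b - b' ∈ Algebra.adjoin k (↑(s ∪ u) : Set A) := by
        have hspan : Submodule.span k (↑u : Set A) ≤
            Subalgebra.toSubmodule (Algebra.adjoin k (↑(s ∪ u) : Set A)) := by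
          rw [Submodule.span_le]
          intro x hx
          exact Algebra.subset_adjoin (by
            rw [Finset.coe_union]; exact Set.mem_union_right _ hx)
        rw [hu] at hspan
        exact hspan hbb'
      have hb'sub : b' ∈ Algebra.adjoin k (↑(s ∪ u) : Set A) :=
        Algebra.adjoin_mono (by rw [Finset.coe_union]; exact Set.subset_union_left) hb'
      have := add_mem hb'sub hsub
      simpa using this
end

section
/- Let A be a finitely generated commutative algebra over a field k whose nilradical rad(A) is infinite-dimensional as a k-vector space. Then the k-subalgebra k·1 + rad(A) of A (equivalently, the k-subalgebra generated by rad(A)) is not finitely generated as a k-algebra. -/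
/-- The `k`-subalgebra `k·1 + I` of `A` associated to an ideal `I` of `A`:
its elements are exactly those `a ∈ A` with `a - c·1 ∈ I` for some `c ∈ k`. -/
def onePlusIdeal (k : Type*) {A : Type*} [CommSemiring k] [CommRing A] [Algebra k A]
    (I : Ideal A) : Subalgebra k A where
  carrier := {a | ∃ c : k, a - algebraMap k A c ∈ I}
  mul_mem' := by
    rintro a b ⟨c, hc⟩ ⟨d, hd⟩
    refine ⟨c * d, ?_⟩
    have h : a * b - algebraMap k A (c * d) =
        (a - algebraMap k A c) * b + algebraMap k A c * (b - algebraMap k A d) := by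
      rw [map_mul]; ring
    rw [h]
    exact I.add_mem (I.mul_mem_right _ hc) (I.mul_mem_left _ hd)
  one_mem' := ⟨1, by simp⟩
  add_mem' := by
    rintro a b ⟨c, hc⟩ ⟨d, hd⟩
    refine ⟨c + d, ?_⟩
    have h : a + b - algebraMap k A (c + d) =
        (a - algebraMap k A c) + (b - algebraMap k A d) := by
      rw [map_add]; ring
    rw [h]
    exact I.add_mem hc hd
  zero_mem' := ⟨0, by simp⟩
  algebraMap_mem' := fun c => ⟨c, by simp⟩

/-- Let `A` be a finitely generated commutative algebra over a field `k` whose nilradical is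
infinite-dimensional over `k`. Then the `k`-subalgebra `k·1 + rad A` of `A` is not finitely
generated as a `k`-algebra. -/
theorem stmt_2 {k : Type*} [Field k] {A : Type*} [CommRing A] [Algebra k A]
    [Algebra.FiniteType k A]
    (h : ¬ FiniteDimensional k ((nilradical A).restrictScalars k)) :
    ¬ (onePlusIdeal k (nilradical A)).FG := by
  set B := onePlusIdeal k (nilradical A) with hBdef
  intro hFG
  apply h
  haveI : Algebra.FiniteType k B := (Subalgebra.fg_iff_finiteType B).mp hFG
  haveI : Algebra.IsIntegral k B := by
    constructor
    intro b
    rw [← isIntegral_algHom_iff B.val Subtype.val_injective]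
    obtain ⟨c, hc⟩ := (b.2 : ∃ c : k, (b : A) - algebraMap k A c ∈ nilradical A)
    have : (B.val b : A) = ((B.val b : A) - algebraMap k A c) + algebraMap k A c := by ring
    rw [this]
    refine IsIntegral.add ?_ (isIntegral_algebraMap)
    obtain ⟨n, hn⟩ := hc
    exact ⟨Polynomial.X ^ n, Polynomial.monic_X_pow n, by simpa using hn⟩
  haveI : Module.Finite k B := Algebra.IsIntegral.finite
  haveI : FiniteDimensional k (Subalgebra.toSubmodule B) := ‹Module.Finite k B›
  exact Submodule.finiteDimensional_of_le
    (show (nilradical A).restrictScalars k ≤ Subalgebra.toSubmodule B from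
      fun x hx => ⟨0, by simpa using hx⟩)
end

section
/- Let k be a field and let B₁, B₂ be commutative k-algebras such that every k-subalgebra of B₁ is finitely generated as a k-algebra and every k-subalgebra of B₂ is finitely generated as a k-algebra. Then every k-subalgebra of the product algebra B₁ × B₂ is finitely generated as a k-algebra. -/
set_option maxHeartbeats 1000000
set_option synthInstance.maxHeartbeats 1000000

/-- Let `k` be a field and `B₁, B₂` commutative `k`-algebras in which every `k`-subalgebra is
finitely generated. Then every `k`-subalgebra of the product algebra `B₁ × B₂` is finitely
generated as a `k`-algebra. -/
theorem stmt_4 {k : Type*} [Field k]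
    {B₁ : Type*} [CommRing B₁] [Algebra k B₁]
    {B₂ : Type*} [CommRing B₂] [Algebra k B₂]
    (h₁ : ∀ S : Subalgebra k B₁, S.FG)
    (h₂ : ∀ S : Subalgebra k B₂, S.FG) :
    ∀ S : Subalgebra k (B₁ × B₂), S.FG := by
  intro S
  classical
  set S₁ : Subalgebra k B₁ := S.map (AlgHom.fst k B₁ B₂) with hS₁
  set S₂ : Subalgebra k B₂ := S.map (AlgHom.snd k B₁ B₂) with hS₂
  set P : Subalgebra k (B₁ × B₂) := S₁.prod S₂ with hP
  have hle : S ≤ P := by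
    intro x hx
    exact ⟨⟨x, hx, rfl⟩, ⟨x, hx, rfl⟩⟩
  -- P is finitely generated
  have hPfg : P.FG := (h₁ S₁).prod (h₂ S₂)
  -- S' : copy of S inside ↥P
  set S' : Subalgebra k ↥P := S.comap P.val with hS'
  -- the two idempotents of ↥P
  have he₁ : ((1, 0) : B₁ × B₂) ∈ P := ⟨one_mem _, zero_mem _⟩
  have he₂ : ((0, 1) : B₁ × B₂) ∈ P := ⟨zero_mem _, one_mem _⟩
  set e₁ : ↥P := ⟨(1, 0), he₁⟩
  set e₂ : ↥P := ⟨(0, 1), he₂⟩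
  -- ↥P is module-finite over S'
  have hfin : (⊤ : Submodule ↥S' ↥P).FG := by
    refine ⟨{e₁, e₂}, ?_⟩
    rw [eq_top_iff]
    rintro ⟨⟨a, b⟩, ha, hb⟩ -
    obtain ⟨x, hxS, hx⟩ := ha
    obtain ⟨y, hyS, hy⟩ := hb
    have hxP : x ∈ P := hle hxS
    have hyP : y ∈ P := hle hyS
    have hs₁ : (⟨x, hxP⟩ : ↥P) ∈ S' := by simpa [hS'] using hxS
    have hs₂ : (⟨y, hyP⟩ : ↥P) ∈ S' := by simpa [hS'] using hyS
    have :
        (⟨(a, b), ⟨⟨x, hxS, hx⟩, ⟨y, hyS, hy⟩⟩⟩ : ↥P) =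
          (⟨⟨x, hxP⟩, hs₁⟩ : ↥S') • e₁ + (⟨⟨y, hyP⟩, hs₂⟩ : ↥S') • e₂ := by
      ext : 1
      show (a, b) = x * (1, 0) + y * (0, 1)
      have : x * (1, 0) + y * (0, 1) = (x.1, y.2) := by
        ext <;> simp
      rw [this]
      exact Prod.ext hx.symm hy.symm
    rw [this]
    exact add_mem
      (Submodule.smul_mem _ _ (Submodule.subset_span (by simp)))
      (Submodule.smul_mem _ _ (Submodule.subset_span (by simp)))
  -- Artin--Tate
  have hPtop : (⊤ : Subalgebra k ↥P).FG := (Subalgebra.fg_top P).2 hPfg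
  have hinj : Function.Injective (algebraMap ↥S' ↥P) := Subtype.val_injective
  have hS'fg : (⊤ : Subalgebra k ↥S').FG := fg_of_fg_of_fg k ↥S' ↥P hPtop hfin hinj
  have : S'.FG := (Subalgebra.fg_top S').1 hS'fg
  have hmap : S'.map P.val = S := by
    rw [hS', Subalgebra.map_comap_eq, Subalgebra.range_val, inf_of_le_left hle]
  simpa [hmap] using this.map P.val
end

section
/- Let k be an algebraically closed field of characteristic zero, A a reduced finitely generated commutative k-algebra, and G a group acting on A by k-algebra automorphisms. Let I₁ and I₂ be radical ideals of A that are stable under the G-action and satisfy I₁ ∩ I₂ = 0. Then the following are equivalent: (1) every G-invariant k-subalgebra of A is finitely generated as a k-algebra; (2) every G-invariant k-subalgebra of A/I₁ and every G-invariant k-subalgebra of A/I₂ (with the induced G-actions) is finitely generated as a k-algebra. -/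
open Function

theorem key_ft {k B C₁ C₂ : Type*} [CommRing k] [IsNoetherianRing k]
    [CommRing B] [CommRing C₁] [CommRing C₂]
    [Algebra k B] [Algebra k C₁] [Algebra k C₂]
    (h₁ : Algebra.FiniteType k C₁) (h₂ : Algebra.FiniteType k C₂)
    (f₁ : B →ₐ[k] C₁) (f₂ : B →ₐ[k] C₂)
    (hsur₁ : Function.Surjective f₁) (hsur₂ : Function.Surjective f₂)
    (hker : RingHom.ker f₁ ⊓ RingHom.ker f₂ = ⊥) : Algebra.FiniteType k B := by
  classical
  obtain ⟨s₁, hgen₁⟩ := h₁.1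
  obtain ⟨s₂, hgen₂⟩ := h₂.1
  haveI : IsNoetherianRing C₂ := Algebra.FiniteType.isNoetherianRing k C₂
  -- lifts of generators
  set x : C₁ → B := Function.surjInv hsur₁ with hx
  set y : C₂ → B := Function.surjInv hsur₂ with hy
  have hfx : ∀ c, f₁ (x c) = c := fun c => Function.surjInv_eq hsur₁ c
  have hfy : ∀ c, f₂ (y c) = c := fun c => Function.surjInv_eq hsur₂ c
  -- the image of ker f₁ in C₂ is a finitely generated ideal
  obtain ⟨T, hT⟩ := IsNoetherian.noetherian (Ideal.map f₂ (RingHom.ker f₁))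
  have hch : ∀ t ∈ (T : Set C₂), ∃ j : B, j ∈ RingHom.ker f₁ ∧ f₂ j = t := by
    intro t ht
    have : t ∈ Ideal.map f₂ (RingHom.ker f₁) := by
      rw [← hT]; exact Submodule.subset_span ht
    obtain ⟨j, hj, hjt⟩ := Ideal.mem_map_iff_of_surjective f₂ hsur₂ |>.mp this
    exact ⟨j, hj, hjt⟩
  choose! g hg1 hg2 using hch
  -- the candidate generating set
  set gens : Set B := x '' ↑s₁ ∪ y '' ↑s₂ ∪ g '' ↑T with hgens
  have hfin : gens.Finite := by
    apply Set.Finite.union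
    · exact Set.Finite.union (s₁.finite_toSet.image x) (s₂.finite_toSet.image y)
    · exact T.finite_toSet.image g
  set S : Subalgebra k B := Algebra.adjoin k gens with hS
  -- S surjects onto C₁ and C₂
  have hmap₁ : S.map f₁ = ⊤ := by
    rw [hS, AlgHom.map_adjoin, eq_top_iff, ← hgen₁]
    apply Algebra.adjoin_mono
    intro c hc
    exact ⟨x c, Or.inl (Or.inl ⟨c, hc, rfl⟩), hfx c⟩
  have hmap₂ : S.map f₂ = ⊤ := by
    rw [hS, AlgHom.map_adjoin, eq_top_iff, ← hgen₂]
    apply Algebra.adjoin_mono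
    intro c hc
    exact ⟨y c, Or.inl (Or.inr ⟨c, hc, rfl⟩), hfy c⟩
  have hsurjS₁ : ∀ c : C₁, ∃ s ∈ S, f₁ s = c := by
    intro c
    have : c ∈ S.map f₁ := hmap₁ ▸ Algebra.mem_top
    obtain ⟨s, hs, rfl⟩ := this
    exact ⟨s, hs, rfl⟩
  have hsurjS₂ : ∀ c : C₂, ∃ s ∈ S, f₂ s = c := by
    intro c
    have : c ∈ S.map f₂ := hmap₂ ▸ Algebra.mem_top
    obtain ⟨s, hs, rfl⟩ := this
    exact ⟨s, hs, rfl⟩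
  -- ker f₁ ⊆ S
  have hkerS : ∀ a ∈ RingHom.ker f₁, a ∈ S := by
    intro a ha
    have hmem : f₂ a ∈ Ideal.map f₂ (RingHom.ker f₁) := Ideal.mem_map_of_mem f₂ ha
    rw [← hT] at hmem
    have main : ∀ z ∈ Submodule.span C₂ (T : Set C₂),
        ∃ s : B, s ∈ S ∧ s ∈ RingHom.ker f₁ ∧ f₂ s = z := by
      intro z hz
      induction hz using Submodule.span_induction with
      | mem t ht =>
          exact ⟨g t, Algebra.subset_adjoin (Or.inr ⟨t, ht, rfl⟩), hg1 t ht, hg2 t ht⟩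
      | zero => exact ⟨0, S.zero_mem, (RingHom.ker f₁).zero_mem, map_zero f₂⟩
      | add u v hu hv ihu ihv =>
          obtain ⟨s, hsS, hsk, hsf⟩ := ihu
          obtain ⟨s', hs'S, hs'k, hs'f⟩ := ihv
          exact ⟨s + s', S.add_mem hsS hs'S, (RingHom.ker f₁).add_mem hsk hs'k,
            by rw [map_add, hsf, hs'f]⟩
      | smul c z hz ihz =>
          obtain ⟨s, hsS, hsk, hsf⟩ := ihz
          obtain ⟨sc, hscS, hscf⟩ := hsurjS₂ c
          exact ⟨sc * s, S.mul_mem hscS hsS, Ideal.mul_mem_left _ _ hsk,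
            by rw [map_mul, hsf, hscf, smul_eq_mul]⟩
    obtain ⟨s, hsS, hsk, hsf⟩ := main _ hmem
    have hsub : a - s ∈ RingHom.ker f₁ ⊓ RingHom.ker f₂ := by
      refine ⟨(RingHom.ker f₁).sub_mem ha hsk, ?_⟩
      show f₂ (a - s) = 0
      rw [map_sub, hsf, sub_self]
    rw [hker, Ideal.mem_bot] at hsub
    rw [sub_eq_zero.mp hsub]; exact hsS
  -- conclude S = ⊤
  have hStop : S = ⊤ := by
    rw [eq_top_iff]
    intro b _
    obtain ⟨s, hsS, hsf⟩ := hsurjS₁ (f₁ b)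
    have hbs : b - s ∈ RingHom.ker f₁ := by
      show f₁ (b - s) = 0
      rw [map_sub, hsf, sub_self]
    have : b = s + (b - s) := by ring
    rw [this]
    exact S.add_mem hsS (hkerS _ hbs)
  exact ⟨⟨hfin.toFinset, by rwa [hfin.coe_toFinset]⟩⟩


/-- Let `k` be an algebraically closed field of characteristic zero, `A` a reduced finitely
generated commutative `k`-algebra with a `k`-algebra action of a group `G`, and `I₁, I₂`
`G`-stable radical ideals of `A` with `I₁ ∩ I₂ = 0`. Then every `G`-invariant `k`-subalgebra
of `A` is finitely generated iff every `G`-invariant `k`-subalgebra of `A ⧸ I₁` and every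
`G`-invariant `k`-subalgebra of `A ⧸ I₂` is finitely generated. -/
theorem stmt_5 {k : Type*} [Field k] [IsAlgClosed k] [CharZero k]
    {A : Type*} [CommRing A] [Algebra k A] [Algebra.FiniteType k A] [IsReduced A]
    {G : Type*} [Group G] [MulSemiringAction G A] [SMulCommClass G k A]
    (I₁ I₂ : Ideal A) (hrad₁ : I₁.IsRadical) (hrad₂ : I₂.IsRadical)
    (hstab₁ : ∀ (g : G) (x : A), x ∈ I₁ → g • x ∈ I₁)
    (hstab₂ : ∀ (g : G) (x : A), x ∈ I₂ → g • x ∈ I₂)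
    (hint : I₁ ⊓ I₂ = ⊥) :
    (∀ B : Subalgebra k A, (∀ (g : G) (b : A), b ∈ B → g • b ∈ B) → B.FG) ↔
      ((∀ C : Subalgebra k (A ⧸ I₁),
          (∀ (g : G) (a : A), Ideal.Quotient.mk I₁ a ∈ C →
            Ideal.Quotient.mk I₁ (g • a) ∈ C) → C.FG) ∧
        (∀ C : Subalgebra k (A ⧸ I₂),
          (∀ (g : G) (a : A), Ideal.Quotient.mk I₂ a ∈ C →
            Ideal.Quotient.mk I₂ (g • a) ∈ C) → C.FG)) := by
  constructor
  · -- forward direction: pull back invariant subalgebras of the quotients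
    intro h
    have aux : ∀ (I : Ideal A),
        ∀ C : Subalgebra k (A ⧸ I),
          (∀ (g : G) (a : A), Ideal.Quotient.mk I a ∈ C →
            Ideal.Quotient.mk I (g • a) ∈ C) → C.FG := by
      intro I C hC
      set B : Subalgebra k A := C.comap (Ideal.Quotient.mkₐ k I) with hB
      have hBinv : ∀ (g : G) (b : A), b ∈ B → g • b ∈ B := by
        intro g b hb
        exact hC g b hb
      have hBfg : B.FG := h B hBinv
      have hmap : B.map (Ideal.Quotient.mkₐ k I) = C :=
        Subalgebra.map_comap_eq_self_of_surjective Ideal.Quotient.mk_surjective C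
      rw [← hmap]
      exact Subalgebra.FG.map _ hBfg
    exact ⟨aux I₁, aux I₂⟩
  · rintro ⟨h₁, h₂⟩ B hB
    -- the images of B in the quotients are G-invariant subalgebras
    have hinv : ∀ (I : Ideal A), (∀ (g : G) (x : A), x ∈ I → g • x ∈ I) →
        ∀ (g : G) (a : A),
          Ideal.Quotient.mk I a ∈ ((Ideal.Quotient.mkₐ k I).comp B.val).range →
          Ideal.Quotient.mk I (g • a) ∈ ((Ideal.Quotient.mkₐ k I).comp B.val).range := by
      intro I hstab g a ha
      obtain ⟨b, hb⟩ := ha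
      have hb' : Ideal.Quotient.mk I (b : A) = Ideal.Quotient.mk I a := hb
      have hsub : (b : A) - a ∈ I := Ideal.Quotient.eq.mp hb'
      have hsub' : g • (b : A) - g • a ∈ I := by
        rw [← smul_sub]; exact hstab g _ hsub
      refine ⟨⟨g • (b : A), hB g _ b.2⟩, ?_⟩
      show Ideal.Quotient.mk I (g • (b : A)) = Ideal.Quotient.mk I (g • a)
      exact Ideal.Quotient.eq.mpr hsub'
    have hC₁ : ((Ideal.Quotient.mkₐ k I₁).comp B.val).range.FG := h₁ _ (hinv I₁ hstab₁)
    have hC₂ : ((Ideal.Quotient.mkₐ k I₂).comp B.val).range.FG := h₂ _ (hinv I₂ hstab₂)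
    have hft₁ := (Subalgebra.fg_iff_finiteType _).mp hC₁
    have hft₂ := (Subalgebra.fg_iff_finiteType _).mp hC₂
    rw [Subalgebra.fg_iff_finiteType]
    refine key_ft hft₁ hft₂
      ((Ideal.Quotient.mkₐ k I₁).comp B.val).rangeRestrict
      ((Ideal.Quotient.mkₐ k I₂).comp B.val).rangeRestrict
      (AlgHom.rangeRestrict_surjective _) (AlgHom.rangeRestrict_surjective _) ?_
    rw [AlgHom.ker_rangeRestrict, AlgHom.ker_rangeRestrict]
    ext b
    simp only [Submodule.mem_inf, Ideal.mem_bot]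
    constructor
    · rintro ⟨hk1, hk2⟩
      have hm1 : (b : A) ∈ I₁ := Ideal.Quotient.eq_zero_iff_mem.mp hk1
      have hm2 : (b : A) ∈ I₂ := Ideal.Quotient.eq_zero_iff_mem.mp hk2
      have hbot : (b : A) ∈ I₁ ⊓ I₂ := ⟨hm1, hm2⟩
      rw [hint, Ideal.mem_bot] at hbot
      exact Subtype.ext hbot
    · rintro rfl
      exact ⟨map_zero _, map_zero _⟩
end

section
/- Let k be an algebraically closed field of characteristic zero, A a reduced finitely generated commutative k-algebra, and I a radical ideal of A. Suppose there exists a prime ideal p of A that is minimal over I, is not a minimal prime of A, and satisfies that the Krull dimension of A/p is at least 1. Then the k-subalgebra k·1 + I of A is not finitely generated as a k-algebra. -/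
set_option maxHeartbeats 1000000 in
set_option synthInstance.maxHeartbeats 1000000 in
theorem stmt6_aux {k : Type*} [Field k]
    {A : Type*} [CommRing A] [Algebra k A] [Algebra.FiniteType k A]
    (I : Ideal A) (p : Ideal A)
    (hmin : p ∈ I.minimalPrimes) (hnotmin : p ∉ minimalPrimes A)
    (hdim : 1 ≤ ringKrullDim (A ⧸ p)) :
    ¬ (Subalgebra.FG (onePlusIdeal k I)) := by
  intro hFG
  have hp : p.IsPrime := hmin.1.1
  obtain ⟨q, hq, hqp⟩ := Ideal.exists_minimalPrimes_le (I := (⊥ : Ideal A)) (J := p) bot_le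
  have hqprime : q.IsPrime := hq.1.1
  have hqne : q ≠ p := fun h => hnotmin (h ▸ hq)
  have hInotq : ¬ I ≤ q := by
    intro hIq
    exact hqne (le_antisymm hqp (hmin.2 ⟨hqprime, hIq⟩ hqp))
  obtain ⟨f, hfI, hfq⟩ := SetLike.not_le_iff_exists.mp hInotq
  -- membership in I gives membership in k + I
  have hIB : ∀ a ∈ I, a ∈ onePlusIdeal k I := fun a ha => ⟨0, by simpa using ha⟩
  -- pass to the quotient domain A' = A ⧸ q
  let π : A →ₐ[k] A ⧸ q := Ideal.Quotient.mkₐ k q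
  have hπs : Function.Surjective π := Ideal.Quotient.mkₐ_surjective k q
  let B' : Subalgebra k (A ⧸ q) := (onePlusIdeal k I).map π
  have hB'FG : B'.FG := Subalgebra.FG.map _ hFG
  have : Algebra.FiniteType k B' := (Subalgebra.fg_iff_finiteType B').mp hB'FG
  have hNoeth : IsNoetherianRing B' := Algebra.FiniteType.isNoetherianRing k B'
  -- F := image of f is nonzero
  have hF0 : (π f : A ⧸ q) ≠ 0 := by
    simpa [π, Ideal.Quotient.mkₐ_eq_mk, Ideal.Quotient.eq_zero_iff_mem] using hfq
  -- multiplication by F maps A⧸q into B'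
  have hmul : ∀ y : A ⧸ q, π f * y ∈ B' := by
    intro y
    obtain ⟨a, rfl⟩ := hπs y
    exact ⟨f * a, hIB _ (I.mul_mem_right a hfI), map_mul π f a⟩
  -- A⧸q is a finite B'-module, hence integral over B'
  let L : (A ⧸ q) →ₗ[B'] B' :=
    { toFun := fun y => ⟨π f * y, hmul y⟩
      map_add' := fun x y => by ext; simp [mul_add]
      map_smul' := fun b y => by
        ext
        show π f * (b • y) = ((b • (⟨π f * y, hmul y⟩ : B') : B') : A ⧸ q)
        simp only [Subalgebra.smul_def, smul_eq_mul, MulMemClass.coe_mul]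
        ring }
  have hLinj : Function.Injective L := by
    intro x y h
    have h' : (π f : A ⧸ q) * x = π f * y := congrArg Subtype.val h
    exact mul_left_cancel₀ hF0 h'
  have hN : IsNoetherian B' (A ⧸ q) := isNoetherian_of_injective L hLinj
  have hfin : Module.Finite B' (A ⧸ q) := Module.finite_def.mpr (IsNoetherian.noetherian ⊤)
  have hint : Algebra.IsIntegral B' (A ⧸ q) := Algebra.IsIntegral.of_finite _ _
  -- p' := image of p, a prime ideal of A ⧸ q
  have hker : RingHom.ker (π : A →+* A ⧸ q) ≤ p := by
    simpa [π, Ideal.Quotient.mkₐ_eq_mk, Ideal.mk_ker] using hqp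
  let p' : Ideal (A ⧸ q) := p.map (π : A →+* A ⧸ q)
  have hp'prime : p'.IsPrime := Ideal.map_isPrime_of_surjective hπs hker
  have hcomapπ : p'.comap (π : A →+* A ⧸ q) = p := by
    show Ideal.comap (π : A →+* A ⧸ q) (Ideal.map (π : A →+* A ⧸ q) p) = p
    have hπs' : Function.Surjective ⇑(π : A →+* A ⧸ q) := hπs
    rw [Ideal.comap_map_of_surjective _ hπs', ← RingHom.ker_eq_comap_bot]
    rw [sup_eq_left]
    exact hker
  have hmemp' : ∀ a : A, π a ∈ p' ↔ a ∈ p := by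
    intro a
    constructor
    · intro h; rw [← hcomapπ]; exact h
    · intro h; exact Ideal.mem_map_of_mem _ h
  -- the contraction of p' to B' is a maximal ideal
  have hmax : (p'.comap (algebraMap B' (A ⧸ q))).IsMaximal := by
    rw [Ideal.isMaximal_iff]
    constructor
    · intro h1
      have : (1 : A ⧸ q) ∈ p' := h1
      have : (1 : A) ∈ p := by rw [← hmemp' 1]; simpa using this
      exact hp.ne_top ((Ideal.eq_top_iff_one p).mpr this)
    · rintro J b hJ hbn hbJ
      obtain ⟨a, haB, hab⟩ := Subalgebra.mem_map.mp b.2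
      obtain ⟨c, hc⟩ := haB
      have hc0 : c ≠ 0 := by
        rintro rfl
        apply hbn
        have haI : a ∈ I := by simpa using hc
        have : π a ∈ p' := (hmemp' a).mpr (hmin.1.2 haI)
        show (algebraMap B' (A ⧸ q)) b ∈ p'
        have : (b : A ⧸ q) ∈ p' := by rw [← hab]; exact this
        exact this
      -- b - c ∈ J
      have hsub : b - algebraMap k B' c ∈ J := by
        apply hJ
        show (algebraMap B' (A ⧸ q)) (b - algebraMap k B' c) ∈ p'
        have h1 : (algebraMap B' (A ⧸ q)) (b - algebraMap k B' c) =
            π (a - algebraMap k A c) := by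
          have e1 : (algebraMap B' (A ⧸ q)) b = π a := hab.symm
          have e2 : (algebraMap B' (A ⧸ q)) (algebraMap k B' c) = π (algebraMap k A c) := by
            rw [AlgHom.commutes π c, ← IsScalarTower.algebraMap_apply]
          rw [map_sub, map_sub, e1, e2]
        rw [h1]
        exact (hmemp' _).mpr (hmin.1.2 hc)
      have : algebraMap k B' c ∈ J := by
        have := J.sub_mem hbJ hsub
        simpa using this
      have hu : IsUnit (algebraMap k B' c) := (isUnit_iff_ne_zero.mpr hc0).map _
      rw [Ideal.eq_top_of_isUnit_mem J this hu]
      trivial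
  -- lying over: p' is maximal, hence p is maximal
  have hp'max : p'.IsMaximal := Ideal.isMaximal_of_isIntegral_of_isMaximal_comap p' hmax
  have hpmax : p.IsMaximal := by
    rw [← hcomapπ]
    exact Ideal.comap_isMaximal_of_surjective _ hπs
  -- so A ⧸ p is a field, contradicting dim ≥ 1
  have hfield : IsField (A ⧸ p) := by
    rw [← Ideal.Quotient.maximal_ideal_iff_isField_quotient]
    exact hpmax
  rw [ringKrullDim_eq_zero_of_isField hfield] at hdim
  exact absurd hdim (by decide)

/-- Let `k` be an algebraically closed field of characteristic zero, `A` a reduced finitely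
generated commutative `k`-algebra, and `I` a radical ideal of `A`. If some prime `p` minimal
over `I` is not a minimal prime of `A` and `A ⧸ p` has Krull dimension at least `1`, then the
`k`-subalgebra `k·1 + I` of `A` is not finitely generated as a `k`-algebra. -/
theorem stmt_6 {k : Type*} [Field k] [IsAlgClosed k] [CharZero k]
    {A : Type*} [CommRing A] [Algebra k A] [Algebra.FiniteType k A] [IsReduced A]
    (I : Ideal A) (hrad : I.IsRadical) (p : Ideal A)
    (hmin : p ∈ I.minimalPrimes) (hnotmin : p ∉ minimalPrimes A)
    (hdim : 1 ≤ ringKrullDim (A ⧸ p)) :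
    ¬ (onePlusIdeal k I).FG :=
  stmt6_aux I p hmin hnotmin hdim
end

section
/- Let k be a field, A a commutative k-algebra, and I an ideal of A. If the k-subalgebra k·1 + I of A is finitely generated as a k-algebra, then for every positive integer l the quotient k-vector space I/I^l is finite-dimensional. -/
set_option maxHeartbeats 1000000
set_option synthInstance.maxHeartbeats 400000


section Aux

variable {k : Type*} [Field k] {A : Type*} [CommRing A] [Algebra k A]

theorem mem_onePlusIdeal_of_mem (I : Ideal A) {x : A} (hx : x ∈ I) :
    x ∈ onePlusIdeal k I := ⟨0, by simpa using hx⟩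

/-- Every element of `I^l` lifts to an element of `J^l` where `J` is the ideal of
`k·1 + I` corresponding to `I`. -/
theorem exists_lift_mem_pow (I : Ideal A) {l : ℕ} (hl : 0 < l) :
    ∀ x ∈ I ^ l, ∃ y : onePlusIdeal k I,
      y ∈ (I.comap (onePlusIdeal k I).val) ^ l ∧ (y : A) = x := by
  induction l, hl using Nat.le_induction with
  | base =>
    intro x hx
    rw [pow_one] at hx
    exact ⟨⟨x, mem_onePlusIdeal_of_mem I hx⟩, by
      rw [pow_one]; exact Ideal.mem_comap.mpr hx, rfl⟩
  | succ n hn ih =>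
    intro x hx
    rw [pow_succ] at hx
    refine Submodule.mul_induction_on hx ?_ ?_
    · intro a ha b hb
      obtain ⟨ya, hya, hya'⟩ := ih a ha
      refine ⟨ya * ⟨b, mem_onePlusIdeal_of_mem I hb⟩, ?_, by simp [hya']⟩
      rw [pow_succ]
      exact Submodule.mul_mem_mul hya (Ideal.mem_comap.mpr hb)
    · rintro x y ⟨yx, hyx, hyx'⟩ ⟨yy, hyy, hyy'⟩
      exact ⟨yx + yy, Ideal.add_mem _ hyx hyy, by simp [hyx', hyy']⟩

theorem coe_mem_pow (I : Ideal A) (l : ℕ) {y : onePlusIdeal k I}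
    (hy : y ∈ (I.comap (onePlusIdeal k I).val) ^ l) : (y : A) ∈ I ^ l := by
  have h1 : Ideal.map (onePlusIdeal k I).val (I.comap (onePlusIdeal k I).val) ≤ I :=
    Ideal.map_le_iff_le_comap.mpr le_rfl
  have h2 : (y : A) ∈ Ideal.map (onePlusIdeal k I).val ((I.comap (onePlusIdeal k I).val) ^ l) :=
    Ideal.mem_map_of_mem _ hy
  rw [Ideal.map_pow] at h2
  exact Ideal.pow_right_mono h1 l h2

end Aux

/-- Let `k` be a field, `A` a commutative `k`-algebra and `I` an ideal of `A`. If the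
`k`-subalgebra `k·1 + I` of `A` is finitely generated as a `k`-algebra, then for every
positive integer `l` the quotient `k`-vector space `I / I^l` is finite-dimensional. -/
theorem stmt_7 {k : Type*} [Field k] {A : Type*} [CommRing A] [Algebra k A]
    (I : Ideal A) (hfg : (onePlusIdeal k I).FG) :
    ∀ l : ℕ, 0 < l →
      FiniteDimensional k
        ((I.restrictScalars k) ⧸
          (((I ^ l).restrictScalars k).comap (I.restrictScalars k).subtype)) := by
  intro l hl
  set B := onePlusIdeal k I with hB
  set J : Ideal B := I.comap B.val with hJ
  -- `B ⧸ J^l` is finite-dimensional over `k`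
  have hft : Algebra.FiniteType k B := (Subalgebra.fg_iff_finiteType B).mp hfg
  have hftQ : Algebra.FiniteType k (B ⧸ J ^ l) :=
    Algebra.FiniteType.of_surjective (Ideal.Quotient.mkₐ k (J ^ l))
      (Ideal.Quotient.mkₐ_surjective k _)
  have hint : Algebra.IsIntegral k (B ⧸ J ^ l) := by
    constructor
    intro x
    obtain ⟨b, rfl⟩ := Ideal.Quotient.mk_surjective x
    obtain ⟨c, hc⟩ := b.2
    have hbc : b - algebraMap k B c ∈ J := by
      rw [hJ, Ideal.mem_comap]
      simpa using hc
    refine ⟨(Polynomial.X - Polynomial.C c) ^ l, (Polynomial.monic_X_sub_C c).pow l, ?_⟩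
    have heval : Polynomial.aeval (Ideal.Quotient.mk (J ^ l) b)
        ((Polynomial.X - Polynomial.C c) ^ l) = 0 := by
      rw [map_pow, map_sub, Polynomial.aeval_X, Polynomial.aeval_C]
      have hmk : (Ideal.Quotient.mk (J ^ l)) b - algebraMap k (B ⧸ J ^ l) c =
          Ideal.Quotient.mk (J ^ l) (b - algebraMap k B c) := by
        rw [map_sub]
        rfl
      rw [hmk, ← map_pow, Ideal.Quotient.eq_zero_iff_mem]
      exact Ideal.pow_mem_pow hbc l
    rw [Polynomial.aeval_def] at heval
    exact heval
  have hfin : Module.Finite k (B ⧸ J ^ l) := Algebra.IsIntegral.finite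
  -- the linear map from `I` to `B ⧸ J^l`
  let lin : (I.restrictScalars k) →ₗ[k] B :=
    { toFun := fun x => ⟨x.1, mem_onePlusIdeal_of_mem I x.2⟩
      map_add' := fun x y => rfl
      map_smul' := fun c x => rfl }
  let f : (I.restrictScalars k) →ₗ[k] (B ⧸ J ^ l) :=
    (Ideal.Quotient.mkₐ k (J ^ l)).toLinearMap ∘ₗ lin
  have hker : (((I ^ l).restrictScalars k).comap (I.restrictScalars k).subtype)
      = LinearMap.ker f := by
    ext x
    simp only [Submodule.mem_comap, Submodule.restrictScalars_mem, LinearMap.mem_ker]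
    constructor
    · intro hx
      obtain ⟨y, hy, hy'⟩ := exists_lift_mem_pow (k := k) I hl x.1 hx
      show Ideal.Quotient.mkₐ k (J ^ l) (lin x) = 0
      have : lin x = y := Subtype.ext hy'.symm
      rw [this]
      simpa using Ideal.Quotient.eq_zero_iff_mem.mpr hy
    · intro hx
      have : lin x ∈ J ^ l := by
        rw [← Ideal.Quotient.eq_zero_iff_mem]
        exact hx
      exact coe_mem_pow (k := k) I l this
  rw [hker]
  exact (f.quotKerEquivRange).symm.finiteDimensional
end

section
/- Let k be an algebraically closed field of characteristic zero, A a reduced finitely generated commutative k-algebra, and I a radical ideal of A. Suppose there exists a prime ideal p of A that is minimal over I, is not a minimal prime of A, and satisfies that the Krull dimension of A/p is at least 1. Then there exists an integer l ≥ 2 such that the quotient k-vector space I/I^l is infinite-dimensional. -/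
/-- Let `k` be an algebraically closed field of characteristic zero, `A` a reduced finitely
generated commutative `k`-algebra, and `I` a radical ideal of `A`. If some prime `p` minimal
over `I` is not a minimal prime of `A` and `A ⧸ p` has Krull dimension at least `1`, then
there is an integer `l ≥ 2` such that the quotient `k`-vector space `I / I^l` is
infinite-dimensional. -/
theorem stmt_8 {k : Type*} [Field k] [IsAlgClosed k] [CharZero k]
    {A : Type*} [CommRing A] [Algebra k A] [Algebra.FiniteType k A] [IsReduced A]
    (I : Ideal A) (hrad : I.IsRadical) (p : Ideal A)
    (hmin : p ∈ I.minimalPrimes) (hnotmin : p ∉ minimalPrimes A)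
    (hdim : 1 ≤ ringKrullDim (A ⧸ p)) :
    ∃ l : ℕ, 2 ≤ l ∧
      ¬ FiniteDimensional k
        ((I.restrictScalars k) ⧸
          (((I ^ l).restrictScalars k).comap (I.restrictScalars k).subtype)) := by
  haveI : IsNoetherianRing A := Algebra.FiniteType.isNoetherianRing k A
  haveI hp : p.IsPrime := hmin.1.1
  -- a minimal prime of A below p
  obtain ⟨q, hq, hqp⟩ := Ideal.exists_minimalPrimes_le (show (⊥ : Ideal A) ≤ p from bot_le)
  haveI hqprime : q.IsPrime := hq.1.1
  -- Step 1: there is x ∈ I with (I^2 : x) ⊆ p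
  have hx : ∃ x ∈ I, ∀ s : A, s * x ∈ I ^ 2 → s ∈ p := by
    by_contra hcon
    push_neg at hcon
    -- hcon : ∀ x ∈ I, ∃ s, s * x ∈ I ^ 2 ∧ s ∉ p
    set L := Localization.AtPrime p
    have hmaps : I.map (algebraMap A L) ≤ (I ^ 2).map (algebraMap A L) := by
      rw [Ideal.map_le_iff_le_comap]
      intro x hxI
      obtain ⟨s, hs2, hsp⟩ := hcon x hxI
      have hu : IsUnit (algebraMap A L s) :=
        IsLocalization.map_units L (⟨s, hsp⟩ : p.primeCompl)
      have hmem : algebraMap A L (s * x) ∈ (I ^ 2).map (algebraMap A L) :=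
        Ideal.mem_map_of_mem _ hs2
      rw [map_mul] at hmem
      exact Ideal.mem_comap.mpr ((Ideal.unit_mul_mem_iff_mem _ hu).mp hmem)
    have hfg : (I.map (algebraMap A L)).FG := Ideal.FG.map (IsNoetherian.noetherian I) _
    have hle : I.map (algebraMap A L) ≤
        IsLocalRing.maximalIdeal L • I.map (algebraMap A L) := by
      rw [Ideal.smul_eq_mul]
      calc I.map (algebraMap A L) ≤ (I ^ 2).map (algebraMap A L) := hmaps
        _ = I.map (algebraMap A L) * I.map (algebraMap A L) := by
            rw [Ideal.map_pow, sq]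
        _ ≤ IsLocalRing.maximalIdeal L * I.map (algebraMap A L) := by
            refine Ideal.mul_mono_left ?_
            rw [← Localization.AtPrime.map_eq_maximalIdeal]
            exact Ideal.map_mono hmin.1.2
    have hbot : I.map (algebraMap A L) = ⊥ :=
      Submodule.eq_bot_of_le_smul_of_le_jacobson_bot (IsLocalRing.maximalIdeal L) _ hfg hle
        (by rw [IsLocalRing.jacobson_eq_maximalIdeal (⊥ : Ideal L) bot_ne_top])
    have hIq : I ≤ q := by
      intro x hxI
      have h0 : algebraMap A L x = 0 := by
        have := Ideal.mem_map_of_mem (algebraMap A L) hxI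
        rwa [hbot, Ideal.mem_bot] at this
      obtain ⟨⟨s, hs⟩, hsx⟩ := (IsLocalization.map_eq_zero_iff p.primeCompl L x).mp h0
      have hmem : s * x ∈ q := by rw [hsx]; exact q.zero_mem
      exact (hqprime.mem_or_mem hmem).resolve_left (fun h => hs (hqp h))
    have hpq : p = q := le_antisymm (hmin.2 ⟨hqprime, hIq⟩ hqp) hqp
    exact hnotmin (hpq ▸ hq)
  obtain ⟨x, hxI, hcolon⟩ := hx
  -- Step 2: a transcendental element in A ⧸ p
  have htrans : ∃ a : A, Transcendental k (Ideal.Quotient.mk p a) := by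
    by_contra hcon
    push_neg at hcon
    haveI : Algebra.IsAlgebraic k (A ⧸ p) := ⟨by
      intro b
      obtain ⟨a, rfl⟩ := Ideal.Quotient.mk_surjective b
      exact not_not.mp (hcon a)⟩
    haveI : Algebra.IsIntegral k (A ⧸ p) := Algebra.isAlgebraic_iff_isIntegral.mp ‹_›
    have hfield : IsField (A ⧸ p) :=
      (Algebra.IsIntegral.isField_iff_isField (R := k)
        (RingHom.injective (algebraMap k (A ⧸ p)))).mp (Field.toIsField k)
    rw [ringKrullDim_eq_zero_of_isField hfield] at hdim
    norm_num at hdim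
  obtain ⟨a, ha⟩ := htrans
  refine ⟨2, le_refl 2, ?_⟩
  intro hfd
  haveI := hfd
  set S := I.restrictScalars k with hS
  set K := ((I ^ 2).restrictScalars k).comap S.subtype with hK
  have hw : ∀ n : ℕ, a ^ n * x ∈ I := fun n => I.mul_mem_left _ hxI
  let w : ℕ → S := fun n => ⟨a ^ n * x, hw n⟩
  have hli : LinearIndependent k (fun n => K.mkQ (w n)) := by
    rw [linearIndependent_iff]
    intro c hc
    rw [show (fun n => K.mkQ (w n)) = (K.mkQ ∘ w) from rfl,
      ← Finsupp.apply_linearCombination] at hc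
    have hmemK : Finsupp.linearCombination k w c ∈ K := by
      rwa [← Submodule.Quotient.mk_eq_zero K]
    have hmemI2 : (Finsupp.linearCombination k w c : A) ∈ I ^ 2 := hmemK
    have hcoe : (Finsupp.linearCombination k w c : A)
        = Finsupp.linearCombination k (fun n : ℕ => a ^ n * x) c := by
      have := Finsupp.apply_linearCombination k S.subtype w c
      exact this.symm ▸ rfl
    -- rewrite the combination as (aeval a f) * x
    set f : Polynomial k := ⟨AddMonoidAlgebra.ofCoeff c⟩ with hf
    have hkey : Polynomial.aeval a f * x
        = Finsupp.linearCombination k (fun n : ℕ => a ^ n * x) c := by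
      rw [Polynomial.aeval_def, Polynomial.eval₂_eq_sum, Finsupp.linearCombination_apply]
      rw [Polynomial.sum_def, Finsupp.sum, Polynomial.support_ofFinsupp, Finset.sum_mul]
      refine Finset.sum_congr rfl fun n _ => ?_
      rw [Algebra.smul_def, mul_assoc]
      rfl
    have hmem2 : Polynomial.aeval a f * x ∈ I ^ 2 := by
      rw [hkey, ← hcoe]; exact hmemI2
    have hmemp : Polynomial.aeval a f ∈ p := hcolon _ hmem2
    have h0 : Polynomial.aeval (Ideal.Quotient.mk p a) f = 0 := by
      rw [show Ideal.Quotient.mk p a = Ideal.Quotient.mkₐ k p a from rfl,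
        Polynomial.aeval_algHom_apply]
      simpa [Ideal.Quotient.eq_zero_iff_mem] using hmemp
    by_contra hcne
    exact ha ⟨f, by simpa [hf, Polynomial.ofFinsupp_eq_zero] using hcne, h0⟩
  exact Module.Finite.not_linearIndependent_of_infinite _ hli
end
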